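/- arXiv:2305.01392 — 2 statements merged into one kernel-verified Lean document; each statement's English description precedes it below -/
import Mathlib

section
/- Let C : ℤ → ℝ be symmetric (C(−τ) = C(τ)) and absolutely summable, i.e. ∑_{τ∈ℤ} |C(τ)| < ∞. Then for any real numbers 0 < u′ ≤ u ≤ 1, the normalized double partial sum (1/N) ∑_{t=1}^{⌊Nu⌋} ∑_{t′=1}^{⌊Nu′⌋} C(t − t′) converges, as N → ∞, to u′ · ∑_{τ∈ℤ} C(τ). -/
open Filter Finset

/-- Fiber count of `t - t'` over the rectangle `[1,M] × [1,m]`. -/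
noncomputable def fibCard (M m : ℕ) (τ : ℤ) : ℕ :=
  (((Finset.Icc 1 M) ×ˢ (Finset.Icc 1 m)).filter
    (fun p : ℕ × ℕ => (p.1 : ℤ) - (p.2 : ℤ) = τ)).card

lemma fibCard_le (M m : ℕ) (τ : ℤ) : fibCard M m τ ≤ m := by
  classical
  have : fibCard M m τ ≤ (Finset.Icc 1 m).card := by
    apply Finset.card_le_card_of_injOn (fun p => p.2)
    · intro p hp
      simp only [Finset.mem_coe, Finset.mem_filter, Finset.mem_product] at hp
      exact hp.1.2
    · intro p hp q hq h
      simp only [Finset.coe_filter, Set.mem_setOf_eq, Finset.mem_product] at hp hq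
      dsimp at h
      have : (p.1 : ℤ) = q.1 := by omega
      have h1 : p.1 = q.1 := by exact_mod_cast this
      exact Prod.ext h1 h
  simpa [Nat.card_Icc] using this

lemma fibCard_ge (M m : ℕ) (hmM : m ≤ M) (τ : ℤ) :
    m - τ.natAbs ≤ fibCard M m τ := by
  classical
  rcases le_or_gt 0 τ with hτ | hτ
  · -- τ ≥ 0, inject Icc 1 (m - τ.natAbs) via t' ↦ (t' + τ.natAbs, t')
    set k := τ.natAbs with hk
    have hkτ : (k : ℤ) = τ := by omega
    have : (Finset.Icc 1 (m - k)).card ≤ fibCard M m τ := by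
      apply Finset.card_le_card_of_injOn (fun t' => (t' + k, t'))
      · intro t' ht'
        simp only [Finset.mem_coe, Finset.mem_Icc] at ht'
        simp only [fibCard, Finset.mem_coe, Finset.mem_filter, Finset.mem_product, Finset.mem_Icc]
        refine ⟨⟨⟨by omega, by omega⟩, ⟨by omega, by omega⟩⟩, ?_⟩
        push_cast
        omega
      · intro a _ b _ h
        exact (Prod.ext_iff.mp h).2
    rw [Nat.card_Icc] at this
    omega
  · -- τ < 0, inject Icc (1 + τ.natAbs) m via t' ↦ (t' - τ.natAbs, t')
    set k := τ.natAbs with hk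
    have hkτ : (k : ℤ) = -τ := by omega
    have : (Finset.Icc (1 + k) m).card ≤ fibCard M m τ := by
      apply Finset.card_le_card_of_injOn (fun t' => (t' - k, t'))
      · intro t' ht'
        simp only [Finset.mem_coe, Finset.mem_Icc] at ht'
        simp only [fibCard, Finset.mem_coe, Finset.mem_filter, Finset.mem_product, Finset.mem_Icc]
        refine ⟨⟨⟨by omega, by omega⟩, ⟨by omega, by omega⟩⟩, ?_⟩
        have : ((t' - k : ℕ) : ℤ) = (t' : ℤ) - k := by omega
        rw [this]; omega
      · intro a _ b _ h
        exact (Prod.ext_iff.mp h).2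
    rw [Nat.card_Icc] at this
    omega

/-- For a symmetric, absolutely summable `C : ℤ → ℝ` and reals
`0 < u' ≤ u ≤ 1`, the normalized double partial sum
`(1/N) ∑_{t=1}^{⌊Nu⌋} ∑_{t'=1}^{⌊Nu'⌋} C(t - t')` converges to `u' * ∑_{τ∈ℤ} C(τ)`. -/
theorem stmt_0 (C : ℤ → ℝ) (hsym : ∀ τ : ℤ, C (-τ) = C τ)
    (hsum : Summable (fun τ : ℤ => |C τ|)) (u u' : ℝ)
    (h0 : 0 < u') (h1 : u' ≤ u) (h2 : u ≤ 1) :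
    Tendsto
      (fun N : ℕ =>
        (1 / (N : ℝ)) *
          ∑ t ∈ Finset.Icc 1 ⌊(N : ℝ) * u⌋₊, ∑ t' ∈ Finset.Icc 1 ⌊(N : ℝ) * u'⌋₊,
            C ((t : ℤ) - (t' : ℤ)))
      atTop (nhds (u' * ∑' τ : ℤ, C τ)) := by
  classical
  set M : ℕ → ℕ := fun N => ⌊(N : ℝ) * u⌋₊ with hM
  set m : ℕ → ℕ := fun N => ⌊(N : ℝ) * u'⌋₊ with hm
  have hu'pos := h0
  have humM : ∀ N, m N ≤ M N := fun N =>
    Nat.floor_le_floor (by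
      apply mul_le_mul_of_nonneg_left h1 (Nat.cast_nonneg N))
  -- Rewrite as a tsum over ℤ
  have key : ∀ N : ℕ,
      (1 / (N : ℝ)) * ∑ t ∈ Finset.Icc 1 (M N), ∑ t' ∈ Finset.Icc 1 (m N),
        C ((t : ℤ) - (t' : ℤ))
      = ∑' τ : ℤ, ((fibCard (M N) (m N) τ : ℝ) / N) * C τ := by
    intro N
    set s := (Finset.Icc 1 (M N)) ×ˢ (Finset.Icc 1 (m N)) with hs
    have h1' : ∑ t ∈ Finset.Icc 1 (M N), ∑ t' ∈ Finset.Icc 1 (m N),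
        C ((t : ℤ) - (t' : ℤ)) = ∑ p ∈ s, C ((p.1 : ℤ) - (p.2 : ℤ)) := by
      rw [Finset.sum_product]
    rw [h1', Finset.sum_comp C (fun p : ℕ × ℕ => (p.1 : ℤ) - (p.2 : ℤ))]
    rw [eq_comm]
    have hz : ∀ τ ∉ s.image (fun p : ℕ × ℕ => (p.1 : ℤ) - (p.2 : ℤ)),
        ((fibCard (M N) (m N) τ : ℝ) / N) * C τ = 0 := by
      intro τ hτ
      have : fibCard (M N) (m N) τ = 0 := by
        rw [fibCard, Finset.card_eq_zero]
        rw [Finset.filter_eq_empty_iff]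
        intro p hp h
        exact hτ (Finset.mem_image.mpr ⟨p, hp, h⟩)
      simp [this]
    rw [tsum_eq_sum hz, Finset.mul_sum]
    apply Finset.sum_congr rfl
    intro τ _
    have hfib : #(s.filter (fun a : ℕ × ℕ => (a.1 : ℤ) - (a.2 : ℤ) = τ))
        = fibCard (M N) (m N) τ := rfl
    rw [nsmul_eq_mul, hfib]
    ring
  refine (tendsto_congr key).mpr ?_
  -- Dominated convergence
  have hlim : ∀ τ : ℤ,
      Tendsto (fun N : ℕ => ((fibCard (M N) (m N) τ : ℝ) / N)) atTop (nhds u') := by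
    intro τ
    have hlow : Tendsto (fun N : ℕ => u' - (1 + (τ.natAbs : ℝ)) / N) atTop (nhds u') := by
      have : Tendsto (fun N : ℕ => (1 + (τ.natAbs : ℝ)) / N) atTop (nhds 0) :=
        tendsto_const_nhds.div_atTop tendsto_natCast_atTop_atTop
      simpa using tendsto_const_nhds.sub this
    apply tendsto_of_tendsto_of_tendsto_of_le_of_le' hlow tendsto_const_nhds
    · filter_upwards [eventually_ge_atTop 1] with N hN
      have hN0 : (0 : ℝ) < N := by exact_mod_cast hN
      rw [sub_le_iff_le_add, ← add_div, le_div_iff₀ hN0]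
      have hfloor : (N : ℝ) * u' - 1 < (m N : ℝ) := by
        have := Nat.sub_one_lt_floor ((N : ℝ) * u')
        exact_mod_cast this
      have hge : (m N : ℝ) - (τ.natAbs : ℝ) ≤ (fibCard (M N) (m N) τ : ℝ) := by
        have h := fibCard_ge (M N) (m N) (humM N) τ
        have : ((m N - τ.natAbs : ℕ) : ℝ) ≤ (fibCard (M N) (m N) τ : ℝ) := by
          exact_mod_cast h
        refine le_trans ?_ this
        rcases le_or_gt τ.natAbs (m N) with h' | h'
        · rw [Nat.cast_sub h']
        · have : (m N : ℝ) ≤ (τ.natAbs : ℝ) := by exact_mod_cast h'.le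
          have h0' : (0:ℝ) ≤ ((m N - τ.natAbs : ℕ) : ℝ) := Nat.cast_nonneg _
          linarith
      have hu'N : (N : ℝ) * u' ≤ (m N : ℝ) + 1 := by linarith
      have hcomm : u' * (N : ℝ) = (N : ℝ) * u' := mul_comm _ _
      linarith
    · filter_upwards [eventually_ge_atTop 1] with N hN
      have hN0 : (0 : ℝ) < N := by exact_mod_cast hN
      rw [div_le_iff₀ hN0]
      have h1' : (fibCard (M N) (m N) τ : ℝ) ≤ (m N : ℝ) := by
        exact_mod_cast fibCard_le (M N) (m N) τ
      have h2' : (m N : ℝ) ≤ (N : ℝ) * u' :=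
        Nat.floor_le (by positivity)
      calc (fibCard (M N) (m N) τ : ℝ) ≤ (N : ℝ) * u' := le_trans h1' h2'
        _ = u' * N := by ring
  have := tendsto_tsum_of_dominated_convergence (f := fun (N : ℕ) (τ : ℤ) =>
      ((fibCard (M N) (m N) τ : ℝ) / N) * C τ)
      (g := fun τ : ℤ => u' * C τ) (bound := fun τ : ℤ => |C τ|) hsum
      (fun τ => (hlim τ).mul_const (C τ)) ?_
  · have htsum : ∑' τ : ℤ, u' * C τ = u' * ∑' τ : ℤ, C τ := tsum_mul_left
    rw [← htsum]
    exact this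
  · filter_upwards [eventually_ge_atTop 1] with N hN
    intro τ
    have hN0 : (0 : ℝ) < N := by exact_mod_cast hN
    rw [Real.norm_eq_abs, abs_mul]
    have hq : |((fibCard (M N) (m N) τ : ℝ) / N)| ≤ 1 := by
      rw [abs_of_nonneg (by positivity), div_le_one hN0]
      have h1' : (fibCard (M N) (m N) τ : ℝ) ≤ (m N : ℝ) := by
        exact_mod_cast fibCard_le (M N) (m N) τ
      have h2' : (m N : ℝ) ≤ (N : ℝ) * u' := Nat.floor_le (by positivity)
      have h3' : (N : ℝ) * u' ≤ N := by nlinarith [h1.trans h2]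
      linarith
    calc |((fibCard (M N) (m N) τ : ℝ) / N)| * |C τ| ≤ 1 * |C τ| :=
          mul_le_mul_of_nonneg_right hq (abs_nonneg _)
      _ = |C τ| := one_mul _
end

section
/- Let f : [−π, π] → ℝ be Lebesgue integrable with f(λ) ≥ m ≥ 0 for almost every λ, and define C(τ) = ∫_{−π}^{π} f(λ) cos(τλ) dλ for τ ∈ ℤ. Then for every N ≥ 1 and every real vector x = (x_1, …, x_N), the Toeplitz quadratic form satisfies ∑_{s=1}^N ∑_{t=1}^N x_s x_t C(s − t) ≥ 2π m ∑_{t=1}^N x_t². -/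
open Finset MeasureTheory Real

lemma cos_int_integral (k : ℤ) :
    (∫ l in Set.Icc (-Real.pi) Real.pi, Real.cos ((k:ℝ) * l)) =
      if k = 0 then 2 * Real.pi else 0 := by
  have hle : -Real.pi ≤ Real.pi := by linarith [Real.pi_pos]
  rw [MeasureTheory.integral_Icc_eq_integral_Ioc,
    ← intervalIntegral.integral_of_le hle]
  by_cases hk : k = 0
  · simp [hk, two_mul]
  · have hk' : (k:ℝ) ≠ 0 := Int.cast_ne_zero.mpr hk
    rw [if_neg hk, intervalIntegral.integral_comp_mul_left Real.cos hk']
    rw [integral_cos]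
    rw [show (k:ℝ) * Real.pi = (k:ℤ) * Real.pi by norm_num,
      show (k:ℝ) * -Real.pi = (-k : ℤ) * Real.pi by push_cast; ring,
      Real.sin_int_mul_pi, Real.sin_int_mul_pi]
    simp

lemma key_identity (S : Finset ℕ) (x : ℕ → ℝ) (l : ℝ) :
    ∑ s ∈ S, ∑ t ∈ S, x s * x t * Real.cos (((((s:ℤ) - (t:ℤ)) : ℤ):ℝ) * l) =
      (∑ t ∈ S, x t * Real.cos (t * l))^2 + (∑ t ∈ S, x t * Real.sin (t * l))^2 := by
  rw [sq, sq, Finset.sum_mul_sum, Finset.sum_mul_sum, ← Finset.sum_add_distrib]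
  refine Finset.sum_congr rfl fun s _ => ?_
  rw [← Finset.sum_add_distrib]
  refine Finset.sum_congr rfl fun t _ => ?_
  have h : (((((s:ℤ) - (t:ℤ) : ℤ)):ℝ)) * l = (s:ℝ)*l - (t:ℝ)*l := by push_cast; ring
  rw [h, Real.cos_sub]; ring

set_option maxHeartbeats 1000000 in
/-- If `f : [−π,π] → ℝ` is integrable with `f ≥ m ≥ 0` a.e. and
`C(τ) = ∫_{−π}^{π} f(λ) cos(τλ) dλ`, then the Toeplitz quadratic form satisfies
`∑_{s=1}^N ∑_{t=1}^N x_s x_t C(s−t) ≥ 2π m ∑_{t=1}^N x_t²`. -/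
theorem stmt_5 (f : ℝ → ℝ) (m : ℝ) (hm : 0 ≤ m)
    (hf : IntegrableOn f (Set.Icc (-Real.pi) Real.pi))
    (hfm : ∀ᵐ l ∂(volume.restrict (Set.Icc (-Real.pi) Real.pi)), m ≤ f l)
    (C : ℤ → ℝ)
    (hC : ∀ τ : ℤ, C τ = ∫ l in Set.Icc (-Real.pi) Real.pi, f l * Real.cos ((τ : ℝ) * l))
    (N : ℕ) (hN : 1 ≤ N) (x : ℕ → ℝ) :
    2 * Real.pi * m * ∑ t ∈ Finset.Icc 1 N, x t ^ 2 ≤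
      ∑ s ∈ Finset.Icc 1 N, ∑ t ∈ Finset.Icc 1 N, x s * x t * C ((s : ℤ) - (t : ℤ)) := by
  set S : Finset ℕ := Finset.Icc 1 N with hS
  set I : Set ℝ := Set.Icc (-Real.pi) Real.pi with hI
  set g : ℝ → ℝ := fun l =>
    (∑ t ∈ S, x t * Real.cos (t * l))^2 + (∑ t ∈ S, x t * Real.sin (t * l))^2 with hg
  -- integrability of f * cos(k·)
  have hcosmeas : ∀ k : ℤ, IntegrableOn (fun l => f l * Real.cos ((k:ℝ)*l)) I := by
    intro k
    have := hf.bdd_mul (f := fun l => Real.cos ((k:ℝ)*l)) (c := 1)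
      ((Real.continuous_cos.comp (continuous_const.mul continuous_id)).aestronglyMeasurable)
      (Filter.Eventually.of_forall fun l => by simpa using Real.abs_cos_le_one _)
    exact this.congr (Filter.Eventually.of_forall fun l => mul_comm _ _)
  -- integrability of cos(k·) on I
  have hcosI : ∀ k : ℤ, IntegrableOn (fun l => Real.cos ((k:ℝ)*l)) I := fun k =>
    (Real.continuous_cos.comp (continuous_const.mul continuous_id)).integrableOn_Icc
  -- step 1: quadratic form = ∫ f * g
  have h1 : ∑ s ∈ S, ∑ t ∈ S, x s * x t * C ((s : ℤ) - (t : ℤ))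
      = ∫ l in I, f l * g l := by
    calc ∑ s ∈ S, ∑ t ∈ S, x s * x t * C ((s : ℤ) - (t : ℤ))
        = ∑ s ∈ S, ∑ t ∈ S, ∫ l in I,
            x s * x t * (f l * Real.cos (((((s:ℤ) - (t:ℤ)) : ℤ):ℝ) * l)) := by
          refine Finset.sum_congr rfl fun s _ => Finset.sum_congr rfl fun t _ => ?_
          rw [hC, ← MeasureTheory.integral_const_mul]
      _ = ∫ l in I, ∑ s ∈ S, ∑ t ∈ S,
            x s * x t * (f l * Real.cos (((((s:ℤ) - (t:ℤ)) : ℤ):ℝ) * l)) := by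
          rw [MeasureTheory.integral_finset_sum _ (fun s _ =>
            MeasureTheory.integrable_finset_sum _ fun t _ => ((hcosmeas _).const_mul _))]
          exact Finset.sum_congr rfl fun s _ =>
            (MeasureTheory.integral_finset_sum _ fun t _ => ((hcosmeas _).const_mul _)).symm
      _ = ∫ l in I, f l * g l := by
          refine MeasureTheory.integral_congr_ae (Filter.Eventually.of_forall fun l => ?_)
          simp only [hg]
          rw [← key_identity S x l, Finset.mul_sum]
          refine Finset.sum_congr rfl fun s _ => ?_
          rw [Finset.mul_sum]
          exact Finset.sum_congr rfl fun t _ => by ring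
  -- integrability of g and f*g
  have hgc : Continuous g := by
    simp only [hg]
    fun_prop
  have hgI : IntegrableOn g I := by
    rw [hI]; exact hgc.integrableOn_Icc
  have hfgI : IntegrableOn (fun l => f l * g l) I := by
    have : (fun l => f l * g l) = fun l => ∑ s ∈ S, ∑ t ∈ S,
        x s * x t * (f l * Real.cos (((((s:ℤ) - (t:ℤ)) : ℤ):ℝ) * l)) := by
      funext l
      simp only [hg]
      rw [← key_identity S x l, Finset.mul_sum]
      refine Finset.sum_congr rfl fun s _ => ?_
      rw [Finset.mul_sum]
      exact Finset.sum_congr rfl fun t _ => by ring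
    rw [this]
    exact MeasureTheory.integrable_finset_sum _ fun s _ =>
      MeasureTheory.integrable_finset_sum _ fun t _ => ((hcosmeas _).const_mul _)
  -- step 2: ∫ m * g ≤ ∫ f * g
  have hg_nonneg : ∀ l, 0 ≤ g l := fun l => by positivity
  have h2 : (∫ l in I, m * g l) ≤ ∫ l in I, f l * g l := by
    refine MeasureTheory.integral_mono_ae (hgI.const_mul m) hfgI ?_
    filter_upwards [hfm] with l hl
    exact mul_le_mul_of_nonneg_right hl (hg_nonneg l)
  -- step 3: ∫ m * g = 2π m ∑ x²
  have h3 : (∫ l in I, m * g l) = 2 * Real.pi * m * ∑ t ∈ S, x t ^ 2 := by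
    rw [MeasureTheory.integral_const_mul]
    have hgint : (∫ l in I, g l) = 2 * Real.pi * ∑ t ∈ S, x t ^ 2 := by
      have : (∫ l in I, g l) = ∑ s ∈ S, ∑ t ∈ S,
          x s * x t * ∫ l in I, Real.cos (((((s:ℤ) - (t:ℤ)) : ℤ):ℝ) * l) := by
        rw [show (∫ l in I, g l) = ∫ l in I, ∑ s ∈ S, ∑ t ∈ S,
            x s * x t * Real.cos (((((s:ℤ) - (t:ℤ)) : ℤ):ℝ) * l) from
          MeasureTheory.integral_congr_ae (Filter.Eventually.of_forall fun l =>
            (key_identity S x l).symm)]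
        rw [MeasureTheory.integral_finset_sum _ (fun s _ =>
          MeasureTheory.integrable_finset_sum _ fun t _ => (hcosI _).const_mul _)]
        refine Finset.sum_congr rfl fun s _ => ?_
        rw [MeasureTheory.integral_finset_sum _ (fun t _ => (hcosI _).const_mul _)]
        exact Finset.sum_congr rfl fun t _ => by rw [MeasureTheory.integral_const_mul]
      rw [this]
      have : ∀ s ∈ S, ∑ t ∈ S,
          (x s * x t * ∫ l in I, Real.cos (((((s:ℤ) - (t:ℤ)) : ℤ):ℝ) * l))
          = 2 * Real.pi * x s ^ 2 := by
        intro s hs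
        have : ∀ t ∈ S, x s * x t * (∫ l in I, Real.cos (((((s:ℤ) - (t:ℤ)) : ℤ):ℝ) * l))
            = if t = s then 2 * Real.pi * x s ^ 2 else 0 := by
          intro t _
          rw [cos_int_integral]
          by_cases hts : t = s
          · subst hts; simp [sq]; ring
          · have : ¬((s:ℤ) - (t:ℤ) = 0) := by
              intro h
              exact hts (by exact_mod_cast (sub_eq_zero.mp h).symm)
            simp [this, hts]
        rw [Finset.sum_congr rfl this, Finset.sum_ite_eq' S s
          (fun _ => 2 * Real.pi * x s ^ 2), if_pos hs]
      rw [Finset.sum_congr rfl this, ← Finset.mul_sum]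
    rw [hgint]; ring
  rw [h1, ← h3]
  exact h2
end
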